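/- arXiv:2005.03185 — 5 statements merged into one kernel-verified Lean document; each statement's English description precedes it below -/
import Mathlib

section
/- Any L-ensemble is a DPP: if S ~ DPP_L(L), i.e., Pr{S} = det(L_{S,S})/det(I+L), then for every T ⊆ [n], Pr{T ⊆ S} = det(K_{T,T}), where K = L(I+L)^{-1}. -/
open Matrix

/-- The principal submatrix determinant `det(M_{T,T})`. -/
noncomputable def subdet {n : ℕ} (M : Matrix (Fin n) (Fin n) ℝ) (S : Finset (Fin n)) : ℝ :=
  (M.submatrix (fun i : {x // x ∈ S} => (i : Fin n)) (fun j : {x // x ∈ S} => (j : Fin n))).det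

/-!
Multilinearity of the determinant in the rows gives the principal-minor expansion
`det (M + diagonal d) = ∑_S (∏_{i ∉ S} d i) det M_{S,S}`; with `d` the indicator of `Tᶜ` the sum over
`S ⊇ T` of `det L_{S,S}` is `det (L + diagonal 1_{Tᶜ}) = det (A - diagonal 1_T)`, `A = I + L`.
Factoring out `A` and using `det (1 - XY) = det (1 - YX)` leaves `det (1 - diagonal 1_T · A⁻¹)`, whose
rows outside `T` are those of the identity, so it equals `det (K_{T,T})` with `K = 1 - A⁻¹ = L A⁻¹`.
-/

namespace Matrix

variable {ι R : Type*} [Fintype ι] [DecidableEq ι] [CommRing R]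

theorem det_of_rows_ite_one (M : Matrix ι ι R) (S : Finset ι) :
    (of fun i => if i ∈ S then M i else (1 : Matrix ι ι R) i).det =
      (M.submatrix ((↑) : S → ι) (↑)).det := by
  rw [twoBlockTriangular_det _ (· ∈ S)]
  · have hcompl : toSquareBlockProp (of fun i => if i ∈ S then M i else (1 : Matrix ι ι R) i)
        (· ∉ S) = 1 := by
      ext i j
      simp [toSquareBlockProp, toBlock, i.2, one_apply, Subtype.ext_iff]
    have hS : toSquareBlockProp (of fun i => if i ∈ S then M i else (1 : Matrix ι ι R) i)
        (· ∈ S) = M.submatrix ((↑) : S → ι) (↑) := by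
      ext i j
      simp [toSquareBlockProp, toBlock, i.2]
    rw [hcompl, hS, det_one, mul_one]
    -- the two sides differ only in the `Fintype` instance on `↥S`
    convert rfl
  · intro i hi j hj
    simp [hi, one_apply_ne (ne_of_mem_of_not_mem hj hi).symm]

theorem det_add_diagonal (M : Matrix ι ι R) (d : ι → R) :
    (M + diagonal d).det =
      ∑ S : Finset ι, (∏ i ∈ Sᶜ, d i) * (M.submatrix ((↑) : S → ι) (↑)).det := by
  have hterm (s : Finset ι) :
      (of fun i => if i ∈ s then diagonal d i else M i).det =
        (∏ i ∈ s, d i) * (of fun i => if i ∈ sᶜ then M i else (1 : Matrix ι ι R) i).det := by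
    have : (of fun i => if i ∈ s then diagonal d i else M i) =
        diagonal (fun i => if i ∈ s then d i else 1) *
          of fun i => if i ∈ sᶜ then M i else (1 : Matrix ι ι R) i := by
      ext i j
      by_cases hi : i ∈ s <;> simp [diagonal_mul, hi, diagonal_apply, one_apply]
    rw [this, det_mul, det_diagonal, Finset.prod_ite_mem, Finset.univ_inter]
  calc (M + diagonal d).det
      = ∑ s : Finset ι, (of fun i => if i ∈ s then diagonal d i else M i).det := by
        rw [add_comm]
        exact (detRowAlternating : (ι → R) [⋀^ι]→ₗ[R] R).toMultilinearMap.map_add_univ _ _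
    _ = _ := by
        refine Fintype.sum_bijective (·ᶜ) compl_involutive.bijective _ _ fun s => ?_
        rw [hterm, det_of_rows_ite_one, compl_compl]

theorem sum_det_submatrix_supersets (M : Matrix ι ι R) (T : Finset ι) :
    ∑ S ∈ Finset.univ.filter (T ⊆ ·), (M.submatrix ((↑) : S → ι) (↑)).det =
      (M + diagonal fun i => if i ∉ T then 1 else 0).det := by
  rw [det_add_diagonal, Finset.sum_filter]
  refine Finset.sum_congr rfl fun S _ => ?_
  have hsub : (∀ i ∈ Sᶜ, i ∉ T) ↔ T ⊆ S := by
    simp only [Finset.mem_compl, not_imp_not, Finset.subset_iff]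
  simp only [Finset.prod_ite_zero, Finset.prod_const_one, hsub, ite_mul, one_mul, zero_mul]

theorem det_sub_diagonal_of_isUnit {A : Matrix ι ι R} (hA : IsUnit A.det) (T : Finset ι) :
    (A - diagonal fun i => if i ∈ T then 1 else 0).det =
      A.det * ((1 - A⁻¹).submatrix ((↑) : T → ι) (↑)).det := by
  set E : Matrix ι ι R := diagonal fun i => if i ∈ T then 1 else 0
  have hrows : 1 - E * A⁻¹ = of fun i => if i ∈ T then (1 - A⁻¹) i else (1 : Matrix ι ι R) i := by
    ext i j
    by_cases hi : i ∈ T <;> simp [E, diagonal_mul, hi]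
  calc (A - E).det = A.det * (1 - A⁻¹ * E).det := by
        rw [← det_mul, mul_sub, mul_one, mul_nonsing_inv_cancel_left _ _ hA]
    _ = A.det * (1 - E * A⁻¹).det := by rw [det_one_sub_mul_comm]
    _ = _ := by rw [hrows, det_of_rows_ite_one]

end Matrix

/-- Any L-ensemble is a DPP: if `Pr{S} = det(L_{S,S})/det(I+L)`, then for every `T`,
`Pr{T ⊆ S} = det(K_{T,T})` where `K = L(I+L)⁻¹`. -/
theorem lEnsemble_is_dpp {n : ℕ} (L : Matrix (Fin n) (Fin n) ℝ) (hL : L.PosSemidef) :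
    ∀ T : Finset (Fin n),
      ∑ S ∈ Finset.univ.filter (fun S => T ⊆ S),
          subdet L S / ((1 : Matrix (Fin n) (Fin n) ℝ) + L).det
        = subdet (L * ((1 : Matrix (Fin n) (Fin n) ℝ) + L)⁻¹) T := by
  intro T
  set A := (1 : Matrix (Fin n) (Fin n) ℝ) + L
  have hA : A.det ≠ 0 := (PosDef.one.add_posSemidef hL).det_pos.ne'
  have hK : L * A⁻¹ = 1 - A⁻¹ := by
    rw [show L = A - 1 by simp [A], sub_mul, mul_nonsing_inv _ hA.isUnit, one_mul]
  have hshift : (L + diagonal fun i => if i ∉ T then 1 else 0) =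
      A - diagonal fun i => if i ∈ T then 1 else 0 := by
    ext i j
    by_cases hij : i = j
    · subst hij
      by_cases hi : i ∈ T <;> simp [A, hi, add_comm]
    · simp [A, hij]
  simp only [subdet, ← Finset.sum_div]
  rw [sum_det_submatrix_supersets L T, hshift, det_sub_diagonal_of_isUnit hA.isUnit, hK,
    mul_div_cancel_left₀ _ hA]
end

section
/- Unbiasedness of DPP least squares estimator: if X is an n×d full-rank matrix with n ≥ d and S is drawn from the d-DPP with Pr{S} ∝ det(X_S)^2 over subsets S of size d, then E[X_S^{-1} y_S] = argmin_w ||Xw − y||^2 = (X^T X)^{-1} X^T y for any y ∈ R^n. -/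
open Matrix

/-- The `d × d` submatrix of rows of `X` indexed by a subset `S` of size `d`. -/
noncomputable def rowSub {n d : ℕ} (X : Matrix (Fin n) (Fin d) ℝ) (S : Finset (Fin n))
    (h : S.card = d) : Matrix (Fin d) (Fin d) ℝ :=
  X.submatrix (fun i => S.orderEmbOfFin h i) id

/-- The subvector of `y` indexed by a subset `S` of size `d`. -/
noncomputable def vecSub {n d : ℕ} (y : Fin n → ℝ) (S : Finset (Fin n))
    (h : S.card = d) : Fin d → ℝ :=
  fun i => y (S.orderEmbOfFin h i)


lemma det_mul_expand {n d : ℕ} (A : Matrix (Fin d) (Fin n) ℝ) (B : Matrix (Fin n) (Fin d) ℝ) :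
    (A * B).det = ∑ p : Fin d → Fin n, (∏ i, A i (p i)) * (B.submatrix p id).det := by
  have h0 : A * B = Matrix.of fun i => ∑ k, (A i k) • B k := by
    ext i j
    simp [Matrix.mul_apply]
  rw [h0]
  show Matrix.detRowAlternating.toMultilinearMap (fun i => ∑ k, (A i k) • B k) = _
  rw [MultilinearMap.map_sum]
  refine Finset.sum_congr rfl fun p _ => ?_
  rw [MultilinearMap.map_smul_univ]
  rfl

/-- expansion of a `d×d` determinant along columns indexed by permutations -/
lemma det_expand_cols {d : ℕ} (M : Matrix (Fin d) (Fin d) ℝ) :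
    M.det = ∑ σ : Equiv.Perm (Fin d), (Equiv.Perm.sign σ : ℝ) * ∏ i, M i (σ i) := by
  rw [← Matrix.det_transpose, Matrix.det_apply']
  refine Finset.sum_congr rfl fun σ _ => by simp [Matrix.transpose_apply]

/-- inner sum over permutations for a fixed subset -/
lemma perm_sum_eq {n d : ℕ} (A : Matrix (Fin d) (Fin n) ℝ) (B : Matrix (Fin n) (Fin d) ℝ)
    (e : Fin d → Fin n) :
    ∑ σ : Equiv.Perm (Fin d),
        (∏ i, A i (e (σ i))) * (B.submatrix (fun k => e (σ k)) id).det
      = (A.submatrix id e).det * (B.submatrix e id).det := by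
  rw [det_expand_cols (A.submatrix id e), Finset.sum_mul]
  refine Finset.sum_congr rfl fun σ _ => ?_
  have h2 : (B.submatrix (fun k => e (σ k)) id) = (B.submatrix e id).submatrix σ id := by
    ext i j; simp
  rw [h2, Matrix.det_permute]
  simp [Matrix.submatrix_apply]
  ring

noncomputable def cbF {n d : ℕ} (A : Matrix (Fin d) (Fin n) ℝ) (B : Matrix (Fin n) (Fin d) ℝ) :
    Finset (Fin n) → ℝ := fun S =>
  if h : S.card = d then
    (A.submatrix id (fun i => S.orderEmbOfFin h i)).det *
    (B.submatrix (fun i => S.orderEmbOfFin h i) id).det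
  else 0

lemma cbF_eq {n d : ℕ} (A : Matrix (Fin d) (Fin n) ℝ) (B : Matrix (Fin n) (Fin d) ℝ)
    (S : Finset (Fin n)) (h : S.card = d) :
    cbF A B S = (A.submatrix id (fun i => S.orderEmbOfFin h i)).det *
      (B.submatrix (fun i => S.orderEmbOfFin h i) id).det := dif_pos h

lemma cauchy_binet {n d : ℕ} (A : Matrix (Fin d) (Fin n) ℝ) (B : Matrix (Fin n) (Fin d) ℝ) :
    (A * B).det = ∑ S ∈ (Finset.powersetCard d (Finset.univ : Finset (Fin n))).attach,
      (A.submatrix id (fun i => S.1.orderEmbOfFin (Finset.mem_powersetCard.mp S.2).2 i)).det *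
      (B.submatrix (fun i => S.1.orderEmbOfFin (Finset.mem_powersetCard.mp S.2).2 i) id).det := by
  classical
  have hRHS : (∑ S ∈ (Finset.powersetCard d (Finset.univ : Finset (Fin n))).attach,
      (A.submatrix id (fun i => S.1.orderEmbOfFin (Finset.mem_powersetCard.mp S.2).2 i)).det *
      (B.submatrix (fun i => S.1.orderEmbOfFin (Finset.mem_powersetCard.mp S.2).2 i) id).det)
      = ∑ S ∈ Finset.powersetCard d (Finset.univ : Finset (Fin n)), cbF A B S := by
    rw [← Finset.sum_attach (Finset.powersetCard d (Finset.univ : Finset (Fin n))) (cbF A B)]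
    refine Finset.sum_congr rfl fun S _ => ?_
    rw [cbF_eq A B S.1 (Finset.mem_powersetCard.mp S.2).2]
  rw [hRHS, det_mul_expand]
  -- drop non-injective p
  rw [← Finset.sum_filter_add_sum_filter_not Finset.univ
    (fun p : Fin d → Fin n => Function.Injective p)]
  have hz : ∑ p ∈ Finset.univ.filter (fun p : Fin d → Fin n => ¬ Function.Injective p),
      (∏ i, A i (p i)) * (B.submatrix p id).det = 0 := by
    refine Finset.sum_eq_zero fun p hp => ?_
    have hp' := (Finset.mem_filter.mp hp).2
    rw [Function.Injective] at hp'
    push_neg at hp'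
    obtain ⟨a, b, hab, hne⟩ := hp'
    have : (B.submatrix p id).det = 0 :=
      Matrix.det_zero_of_row_eq hne (funext fun k => by simp [hab])
    simp [this]
  rw [hz, add_zero]
  -- fiberwise over the image
  rw [← Finset.sum_fiberwise_of_maps_to (g := fun p : Fin d → Fin n => Finset.image p Finset.univ)
    (t := Finset.powersetCard d (Finset.univ : Finset (Fin n)))
    (fun p hp => by
      rw [Finset.mem_powersetCard]
      exact ⟨Finset.subset_univ _,
        by rw [Finset.card_image_of_injective _ (Finset.mem_filter.mp hp).2]; simp⟩)]
  refine Finset.sum_congr rfl fun S hS => ?_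
  have hcard : S.card = d := (Finset.mem_powersetCard.mp hS).2
  set e : Fin d → Fin n := fun i => S.orderEmbOfFin hcard i with he
  have hei : Function.Injective e := (S.orderEmbOfFin hcard).injective
  have hmem : ∀ i, e i ∈ S := fun i => S.orderEmbOfFin_mem hcard i
  show _ = cbF A B S
  rw [cbF_eq A B S hcard, ← perm_sum_eq A B e]
  have hpk : ∀ p : Fin d → Fin n, p ∈ Finset.filter (fun i => Finset.image i Finset.univ = S)
      (Finset.filter (fun x => Function.Injective x) Finset.univ) → ∀ k, p k ∈ S := by
    intro p hp k
    have him := (Finset.mem_filter.mp hp).2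
    rw [← him]
    exact Finset.mem_image.mpr ⟨k, Finset.mem_univ k, rfl⟩
  have hiso : ∀ (x : {a // a ∈ S}), e ((S.orderIsoOfFin hcard).symm x) = ↑x := by
    intro x
    show ((S.orderIsoOfFin hcard) ((S.orderIsoOfFin hcard).symm x) : Fin n) = ↑x
    rw [OrderIso.apply_symm_apply]
  refine Finset.sum_bij'
    (fun (p : Fin d → Fin n) hp =>
      Equiv.ofBijective
        (fun k => (S.orderIsoOfFin hcard).symm ⟨p k, hpk p hp k⟩)
        (Finite.injective_iff_bijective.mp (fun a b hab => by
          have h2 : (⟨p a, hpk p hp a⟩ : {x // x ∈ S}) = ⟨p b, hpk p hp b⟩ := by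
            have h3 := congrArg (S.orderIsoOfFin hcard) hab
            simpa [OrderIso.apply_symm_apply] using h3
          exact (Finset.mem_filter.mp (Finset.mem_filter.mp hp).1).2
            (congrArg Subtype.val h2))))
    (fun σ _ => fun k => e (σ k)) ?_ ?_ ?_ ?_ ?_
  · intro p hp; exact Finset.mem_univ _
  · -- e ∘ σ lands in the fiber
    intro σ _
    rw [Finset.mem_filter, Finset.mem_filter]
    refine ⟨⟨Finset.mem_univ _, hei.comp σ.injective⟩, ?_⟩
    apply Finset.eq_of_subset_of_card_le
    · intro x hx
      obtain ⟨k, _, rfl⟩ := Finset.mem_image.mp hx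
      exact hmem _
    · show S.card ≤ (Finset.image (fun k => e (σ k)) Finset.univ).card
      have hinj : Function.Injective (fun k => e (σ k)) := fun a b h => σ.injective (hei h)
      rw [Finset.card_image_of_injective _ hinj]
      simp [hcard]
  · -- left inverse
    intro p hp
    funext k
    exact hiso ⟨p k, hpk p hp k⟩
  · -- right inverse
    intro σ _
    refine Equiv.ext fun k => ?_
    show ((S.orderIsoOfFin hcard).symm ⟨e (σ k), hmem (σ k)⟩ : Fin d) = σ k
    rw [OrderIso.symm_apply_eq]
    exact Subtype.ext rfl
  · -- values agree
    intro p hp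
    have key : ∀ σ : Equiv.Perm (Fin d), (fun k => e (σ k)) = p →
        (∏ i, A i (p i)) * (B.submatrix p id).det
          = (∏ i, A i (e (σ i))) * (B.submatrix (fun k => e (σ k)) id).det := by
      intro σ hσ
      subst hσ
      rfl
    exact key _ (funext fun k => hiso ⟨p k, hpk p hp k⟩)

/-- Unbiasedness of the Projection DPP least squares estimator: if `S` is drawn over size-`d`
subsets with `Pr{S} = det(X_S)²/det(XᵀX)`, then `E[X_S⁻¹ y_S] = (XᵀX)⁻¹ Xᵀ y = argmin ‖Xw - y‖²`. -/
theorem projection_dpp_unbiased {n d : ℕ} (X : Matrix (Fin n) (Fin d) ℝ)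
    (hrank : X.rank = d) (y : Fin n → ℝ) :
    ∑ S ∈ (Finset.powersetCard d (Finset.univ : Finset (Fin n))).attach,
      (((rowSub X S.1 (Finset.mem_powersetCard.mp S.2).2).det ^ 2 / (Xᵀ * X).det) •
        ((rowSub X S.1 (Finset.mem_powersetCard.mp S.2).2)⁻¹ *ᵥ
          vecSub y S.1 (Finset.mem_powersetCard.mp S.2).2))
      = (Xᵀ * X)⁻¹ *ᵥ (Xᵀ *ᵥ y) := by
  classical
  set D := (Xᵀ * X).det with hDdef
  have hr : (Xᵀ * X).rank = d := by rw [Matrix.rank_transpose_mul_self, hrank]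
  have hUnit : IsUnit (Xᵀ * X) := by
    rw [← Matrix.mulVec_surjective_iff_isUnit]
    have htop : LinearMap.range (Xᵀ * X).mulVecLin = ⊤ := by
      apply Submodule.eq_top_of_finrank_eq
      rw [← Matrix.rank, hr]
      simp [Module.finrank_pi]
    intro v
    obtain ⟨w, hw⟩ := LinearMap.range_eq_top.mp htop v
    exact ⟨w, hw⟩
  have hD : D ≠ 0 := ((Matrix.isUnit_iff_isUnit_det _).mp hUnit).ne_zero
  have hterm : ∀ (M : Matrix (Fin d) (Fin d) ℝ) (b : Fin d → ℝ),
      (M.det ^ 2) • (M⁻¹ *ᵥ b) = M.det • (Matrix.cramer M b) := by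
    intro M b
    by_cases h : IsUnit M.det
    · rw [Matrix.inv_def, Ring.inverse_eq_inv', Matrix.cramer_eq_adjugate_mulVec,
        Matrix.smul_mulVec, smul_smul]
      congr 1
      have h0 : M.det ≠ 0 := h.ne_zero
      field_simp
    · have h0 : M.det = 0 := by
        by_contra h1
        exact h (isUnit_iff_ne_zero.mpr h1)
      simp [h0]
  have hRHS : (Xᵀ * X)⁻¹ *ᵥ (Xᵀ *ᵥ y)
      = D⁻¹ • Matrix.cramer (Xᵀ * X) (Xᵀ *ᵥ y) := by
    rw [Matrix.inv_def, Ring.inverse_eq_inv', Matrix.cramer_eq_adjugate_mulVec,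
      Matrix.smul_mulVec, hDdef]
  have hmain : ∑ S ∈ (Finset.powersetCard d (Finset.univ : Finset (Fin n))).attach,
      (rowSub X S.1 (Finset.mem_powersetCard.mp S.2).2).det •
        Matrix.cramer (rowSub X S.1 (Finset.mem_powersetCard.mp S.2).2)
          (vecSub y S.1 (Finset.mem_powersetCard.mp S.2).2)
      = Matrix.cramer (Xᵀ * X) (Xᵀ *ᵥ y) := by
    funext i
    rw [Finset.sum_apply]
    simp only [Pi.smul_apply, Matrix.cramer_apply, smul_eq_mul]
    have hcol : (Xᵀ * X).updateCol i (Xᵀ *ᵥ y) = Xᵀ * (X.updateCol i y) := by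
      ext a b
      by_cases hb : b = i
      · subst hb
        simp [Matrix.updateCol_apply, Matrix.mul_apply, Matrix.mulVec, dotProduct,
          Matrix.transpose_apply]
      · simp [Matrix.updateCol_apply, hb, Matrix.mul_apply]
    rw [hcol, cauchy_binet]
    refine Finset.sum_congr rfl fun S _ => ?_
    have h1 : (Xᵀ.submatrix id (fun k => S.1.orderEmbOfFin (Finset.mem_powersetCard.mp S.2).2 k))
        = (rowSub X S.1 (Finset.mem_powersetCard.mp S.2).2)ᵀ := rfl
    have h2 : ((X.updateCol i y).submatrix
          (fun k => S.1.orderEmbOfFin (Finset.mem_powersetCard.mp S.2).2 k) id)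
        = (rowSub X S.1 (Finset.mem_powersetCard.mp S.2).2).updateCol i
            (vecSub y S.1 (Finset.mem_powersetCard.mp S.2).2) := by
      ext a b
      by_cases hb : b = i
      · subst hb
        simp [rowSub, vecSub, Matrix.updateCol_apply, Matrix.submatrix_apply]
      · simp [rowSub, vecSub, Matrix.updateCol_apply, hb, Matrix.submatrix_apply]
    rw [h1, h2, Matrix.det_transpose]
  calc ∑ S ∈ (Finset.powersetCard d (Finset.univ : Finset (Fin n))).attach,
      (((rowSub X S.1 (Finset.mem_powersetCard.mp S.2).2).det ^ 2 / D) •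
        ((rowSub X S.1 (Finset.mem_powersetCard.mp S.2).2)⁻¹ *ᵥ
          vecSub y S.1 (Finset.mem_powersetCard.mp S.2).2))
      = ∑ S ∈ (Finset.powersetCard d (Finset.univ : Finset (Fin n))).attach,
        D⁻¹ • ((rowSub X S.1 (Finset.mem_powersetCard.mp S.2).2).det •
          Matrix.cramer (rowSub X S.1 (Finset.mem_powersetCard.mp S.2).2)
            (vecSub y S.1 (Finset.mem_powersetCard.mp S.2).2)) := by
        refine Finset.sum_congr rfl fun S _ => ?_
        rw [← hterm, smul_smul]
        congr 1
        ring
    _ = D⁻¹ • ∑ S ∈ (Finset.powersetCard d (Finset.univ : Finset (Fin n))).attach,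
        ((rowSub X S.1 (Finset.mem_powersetCard.mp S.2).2).det •
          Matrix.cramer (rowSub X S.1 (Finset.mem_powersetCard.mp S.2).2)
            (vecSub y S.1 (Finset.mem_powersetCard.mp S.2).2)) := by
        rw [Finset.smul_sum]
    _ = (Xᵀ * X)⁻¹ *ᵥ (Xᵀ *ᵥ y) := by rw [hmain, ← hRHS]
end

section
/- Unbiasedness for ridge regression: if S ~ DPP_L((1/λ) X X^T), i.e., Pr{S} ∝ λ^{-|S|} det((X X^T)_{S,S}), then E[X_S^† y_S] = argmin_w ||Xw − y||^2 + λ||w||^2 = (X^T X + λI)^{-1} X^T y. -/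
/-!
By the matrix determinant lemma, `det(X_S X_Sᵀ) · (X_S† y_S)_j = det((XXᵀ + y x_jᵀ)_{S,S}) - det((XXᵀ)_{S,S})`
for the `j`-th column `x_j` of `X`; when `X_S X_Sᵀ` is singular both sides vanish, because a kernel
vector of `X_Sᵀ` is also a kernel vector of `(XXᵀ + y x_jᵀ)_{S,S}`. Weighting by `λ^{-|S|}` and
summing over `S`, the expansion of `det(I + λ⁻¹ M)` into principal minors turns the expectation into
`(det(B + λ⁻¹ y x_jᵀ) - det B) / det B = x_jᵀ B⁻¹ (λ⁻¹ y)` with `B = I + λ⁻¹ XXᵀ`, and the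
push-through identity `(XᵀX + λI) Xᵀ = λ Xᵀ B` identifies `λ⁻¹ Xᵀ B⁻¹ y` with the ridge solution.
-/

open Matrix

/-- The row submatrix `X_S` of `X` (rows indexed by the subset `S`). -/
noncomputable def rowsOf {n d : ℕ} (X : Matrix (Fin n) (Fin d) ℝ) (S : Finset (Fin n)) :
    Matrix {x // x ∈ S} (Fin d) ℝ :=
  X.submatrix (fun i : {x // x ∈ S} => (i : Fin n)) id

open Finset

namespace Matrix

section CommRing

variable {ι R : Type*} [Fintype ι] [DecidableEq ι] [CommRing R]

theorem det_one_add_smul_eq_sum_det_submatrix (z : R) (M : Matrix ι ι R) :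
    det (1 + z • M) = ∑ s : Finset ι, z ^ #s * (M.submatrix ((↑) : s → ι) (↑)).det := by
  have hrows (s : Finset ι) : s.piecewise (z • M).row (1 : Matrix ι ι R).row
      = fun i => (if i ∈ s then z else 1) • s.piecewise M.row (1 : Matrix ι ι R).row i := by
    funext i
    by_cases hi : i ∈ s
    · simp only [piecewise_eq_of_mem _ _ _ hi, if_pos hi]; rfl
    · simp only [piecewise_eq_of_notMem _ _ _ hi, if_neg hi, one_smul]
  calc det (1 + z • M) = detRowAlternating ((z • M).row + (1 : Matrix ι ι R).row) := by
        rw [add_comm]; rfl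
    _ = ∑ s : Finset ι, detRowAlternating (s.piecewise (z • M).row (1 : Matrix ι ι R).row) :=
      detRowAlternating.toMultilinearMap.map_add_univ _ _
    _ = ∑ s : Finset ι, z ^ #s * (M.submatrix ((↑) : s → ι) (↑)).det := by
      refine sum_congr rfl fun s _ => ?_
      rw [hrows, AlternatingMap.map_smul_univ, prod_ite_mem, univ_inter, prod_const, smul_eq_mul]
      exact congrArg _ (det_piecewise_one_eq_submatrix_det M s)

theorem det_add_vecMulVec {A : Matrix ι ι R} (hA : IsUnit A.det) (u v : ι → R) :
    (A + vecMulVec u v).det = A.det * (1 + v ⬝ᵥ A⁻¹ *ᵥ u) := by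
  rw [vecMulVec_eq Unit, det_add_replicateCol_mul_replicateRow hA, det_unique (n := Unit),
    add_apply, one_apply_eq, Matrix.mul_assoc, ← replicateCol_mulVec,
    replicateRow_mul_replicateCol_apply]

theorem eq_nonsing_inv_mulVec_of_mulVec_eq {A : Matrix ι ι R} (hA : IsUnit A.det) {v w : ι → R}
    (h : A *ᵥ v = w) : v = A⁻¹ *ᵥ w := by
  rw [← h, mulVec_mulVec, nonsing_inv_mul _ hA, one_mulVec]

end CommRing

section Field

variable {m k 𝕜 : Type*} [Fintype m] [DecidableEq m] [Fintype k] [DecidableEq k] [Field 𝕜]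

theorem transpose_mul_add_smul_one_mul_transpose (X : Matrix m k 𝕜) {c : 𝕜} (hc : c ≠ 0) :
    (Xᵀ * X + c • 1) * Xᵀ = c • (Xᵀ * (1 + c⁻¹ • (X * Xᵀ))) := by
  rw [Matrix.add_mul, Matrix.mul_add, smul_add, Matrix.mul_smul, smul_smul, mul_inv_cancel₀ hc,
    one_smul, Matrix.mul_one, Matrix.smul_mul, Matrix.one_mul, Matrix.mul_assoc, add_comm]

end Field

section LinearOrderedField

variable {m k 𝕜 : Type*} [Fintype m] [DecidableEq m] [Fintype k]
  [Field 𝕜] [LinearOrder 𝕜] [IsStrictOrderedRing 𝕜]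

theorem exists_ne_zero_transpose_mulVec_eq_zero {M : Matrix m k 𝕜} (h : (M * Mᵀ).det = 0) :
    ∃ v ≠ 0, Mᵀ *ᵥ v = 0 := by
  obtain ⟨v, hv, hMv⟩ := exists_mulVec_eq_zero_iff.mpr h
  refine ⟨v, hv, dotProduct_self_eq_zero.mp ?_⟩
  rw [dotProduct_mulVec, vecMul_transpose, mulVec_mulVec, hMv, zero_dotProduct]

theorem det_mul_transpose_add_vecMulVec_sub_det (M : Matrix m k 𝕜) (u : m → 𝕜) (j : k) :
    (M * Mᵀ + vecMulVec u (M.col j)).det - (M * Mᵀ).det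
      = (M * Mᵀ).det * (Mᵀ *ᵥ ((M * Mᵀ)⁻¹ *ᵥ u)) j := by
  by_cases hdet : (M * Mᵀ).det = 0
  · obtain ⟨v, hv, hMv⟩ := exists_ne_zero_transpose_mulVec_eq_zero hdet
    have hker : (M * Mᵀ + vecMulVec u (M.col j)) *ᵥ v = 0 := by
      have hj : M.col j ⬝ᵥ v = 0 := congrFun hMv j
      rw [add_mulVec, ← mulVec_mulVec, hMv, mulVec_zero, vecMulVec_mulVec, hj]
      simp
    rw [exists_mulVec_eq_zero_iff.mp ⟨v, hv, hker⟩, hdet, zero_mul, sub_zero]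
  · rw [det_add_vecMulVec (isUnit_iff_ne_zero.mpr hdet), mul_one_add, add_sub_cancel_left]
    rfl

end LinearOrderedField

end Matrix

theorem sum_pow_mul_subdet_mul_pinv_apply {n d : ℕ} (X : Matrix (Fin n) (Fin d) ℝ)
    (y : Fin n → ℝ) (c : ℝ) (j : Fin d) :
    ∑ S : Finset (Fin n), c ^ #S * subdet (X * Xᵀ) S *
        ((rowsOf X S)ᵀ *ᵥ ((rowsOf X S * (rowsOf X S)ᵀ)⁻¹ *ᵥ fun i : S => y i)) j
      = det (1 + c • (X * Xᵀ + vecMulVec y (X.col j))) - det (1 + c • (X * Xᵀ)) := by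
  rw [det_one_add_smul_eq_sum_det_submatrix, det_one_add_smul_eq_sum_det_submatrix,
    ← sum_sub_distrib]
  refine sum_congr rfl fun S _ => ?_
  rw [mul_assoc, ← mul_sub]
  exact congrArg _ (det_mul_transpose_add_vecMulVec_sub_det (rowsOf X S) (fun i : S => y i) j).symm

theorem sum_lEnsemble_smul_pinv {n d : ℕ} (X : Matrix (Fin n) (Fin d) ℝ) (y : Fin n → ℝ)
    {c : ℝ} (hB : IsUnit (1 + c • (X * Xᵀ)).det) :
    ∑ S : Finset (Fin n), ((c ^ #S * subdet (X * Xᵀ) S) / (1 + c • (X * Xᵀ)).det) •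
        ((rowsOf X S)ᵀ *ᵥ ((rowsOf X S * (rowsOf X S)ᵀ)⁻¹ *ᵥ fun i : S => y i))
      = Xᵀ *ᵥ ((1 + c • (X * Xᵀ))⁻¹ *ᵥ (c • y)) := by
  funext j
  have hrank_one : 1 + c • (X * Xᵀ + vecMulVec y (X.col j))
      = 1 + c • (X * Xᵀ) + vecMulVec (c • y) (X.col j) := by
    rw [smul_add, smul_vecMulVec, add_assoc]
  calc (∑ S : Finset (Fin n), ((c ^ #S * subdet (X * Xᵀ) S) / (1 + c • (X * Xᵀ)).det) •
          ((rowsOf X S)ᵀ *ᵥ ((rowsOf X S * (rowsOf X S)ᵀ)⁻¹ *ᵥ fun i : S => y i))) j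
      = (det (1 + c • (X * Xᵀ + vecMulVec y (X.col j))) - det (1 + c • (X * Xᵀ)))
          / (1 + c • (X * Xᵀ)).det := by
        simp only [Finset.sum_apply, Pi.smul_apply, smul_eq_mul, div_mul_eq_mul_div, ← sum_div,
          sum_pow_mul_subdet_mul_pinv_apply]
    _ = (Xᵀ *ᵥ ((1 + c • (X * Xᵀ))⁻¹ *ᵥ (c • y))) j := by
        rw [hrank_one, det_add_vecMulVec hB, mul_one_add, add_sub_cancel_left,
          mul_div_cancel_left₀ _ hB.ne_zero]
        rfl

/-- On the support of the DPP `X_S` has full row rank and `X_S† = X_Sᵀ (X_S X_Sᵀ)⁻¹`; off the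
support the weight `det(X_S X_Sᵀ)` vanishes, so the junk value of `⁻¹` there is harmless. -/
theorem lEnsemble_ridge_unbiased {n d : ℕ} (X : Matrix (Fin n) (Fin d) ℝ)
    (y : Fin n → ℝ) (lam : ℝ) (hlam : 0 < lam) :
    ∑ S : Finset (Fin n),
      ((lam⁻¹ ^ S.card * subdet (X * Xᵀ) S) /
          ((1 : Matrix (Fin n) (Fin n) ℝ) + lam⁻¹ • (X * Xᵀ)).det) •
        ((rowsOf X S)ᵀ *ᵥ (((rowsOf X S) * (rowsOf X S)ᵀ)⁻¹ *ᵥ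
          fun i : {x // x ∈ S} => y i))
      = (Xᵀ * X + lam • (1 : Matrix (Fin d) (Fin d) ℝ))⁻¹ *ᵥ (Xᵀ *ᵥ y) := by
  have hB : IsUnit (1 + lam⁻¹ • (X * Xᵀ)).det := by
    have hpsd := (posSemidef_self_mul_conjTranspose X).smul (inv_nonneg.mpr hlam.le)
    exact (PosDef.one.add_posSemidef hpsd).det_pos.ne'.isUnit
  have hC : IsUnit (Xᵀ * X + lam • 1).det := by
    have hpd := (PosDef.one.smul hlam).add_posSemidef (posSemidef_conjTranspose_mul_self X)
    rw [add_comm]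
    exact hpd.det_pos.ne'.isUnit
  rw [sum_lEnsemble_smul_pinv X y hB]
  refine eq_nonsing_inv_mulVec_of_mulVec_eq hC ?_
  rw [mulVec_mulVec, mulVec_mulVec, transpose_mul_add_smul_one_mul_transpose X hlam.ne',
    smul_mul, Matrix.mul_assoc, mul_nonsing_inv _ hB, Matrix.mul_one, smul_mulVec, mulVec_smul,
    smul_smul, mul_inv_cancel₀ hlam.ne', one_smul]
end

section
/- Expected loss of the Projection DPP least squares estimator: if the rows of X ∈ R^{n×d} are in general position (every d rows are linearly independent) and S is drawn with Pr{S} ∝ det(X_S)^2 over size-d subsets, then E[L(X_S^{-1} y_S)] = (d+1) L(w*), where L(w) = ||Xw − y||^2 and w* = argmin_w L(w). -/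
/-!
Let `w*` be the least-squares solution, `r = y - X w*` its residual (so `Xᵀ r = 0` and
`L(w*) = ‖r‖²`), and `M = [X | r]`. Orthogonality makes `MᵀM` block diagonal, so
`det(MᵀM) = det(XᵀX) ‖r‖²`. For `|S| = d` and `i ∉ S`, the Schur complement of `X_S` in the
rows `S ∪ {i}` of `M` gives `det M_{S∪{i}} = ± det X_S · (y_i - x_iᵀ X_S⁻¹ y_S)`, while
`X_S⁻¹ y_S` fits `y` exactly on `S`; hence `det(X_S)² L(X_S⁻¹ y_S) = ∑_{i ∉ S} det(M_{S∪{i}})²`.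
Summing over `S` counts every `(d+1)`-subset `d + 1` times, and Cauchy–Binet turns
`∑_T det(M_T)²` into `det(MᵀM)` and `∑_S det(X_S)²` into `det(XᵀX) > 0`.
-/

open Matrix

/-- The least squares loss `L(w) = ‖Xw - y‖²`. -/
noncomputable def lsLoss {n d : ℕ} (X : Matrix (Fin n) (Fin d) ℝ) (y : Fin n → ℝ)
    (w : Fin d → ℝ) : ℝ :=
  ∑ i, ((X *ᵥ w) i - y i) ^ 2

open Finset Function

theorem Function.Injective.exists_perm_eq_comp {α β : Type*} {f g : α → β}
    (hf : Injective f) (hg : Injective g) (h : Set.range f = Set.range g) :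
    ∃ σ : Equiv.Perm α, f = g ∘ σ :=
  ⟨(Equiv.ofInjective f hf).trans ((Equiv.setCongr h).trans (Equiv.ofInjective g hg).symm),
    funext fun x => by simp [Equiv.apply_ofInjective_symm]⟩

theorem Finset.sum_powersetCard_sum_compl_insert {α M : Type*} [Fintype α] [DecidableEq α]
    [AddCommMonoid M] (k : ℕ) (G : Finset α → M) :
    ∑ S ∈ powersetCard k univ, ∑ i ∈ Sᶜ, G (insert i S)
      = (k + 1) • ∑ T ∈ powersetCard (k + 1) univ, G T := by
  have hcount : ∀ T ∈ powersetCard (k + 1) (univ : Finset α),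
      (k + 1) • G T = ∑ _i ∈ T, G T := by
    intro T hT
    rw [sum_const, (mem_powersetCard.mp hT).2]
  rw [smul_sum, sum_congr rfl hcount, sum_sigma', sum_sigma']
  refine sum_nbij' (fun p => ⟨insert p.2 p.1, p.2⟩) (fun p => ⟨p.1.erase p.2, p.2⟩)
    ?_ ?_ ?_ ?_ fun _ _ => rfl
  all_goals
    rintro ⟨S, i⟩ h
    simp only [mem_sigma, mem_powersetCard, subset_univ, true_and, mem_compl] at h ⊢
  · simp [card_insert_of_notMem h.2, h]
  · simp [card_erase_of_mem h.2, h]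
  · simp [erase_insert h.2]
  · simp [insert_erase h.2]

namespace Matrix

section CauchyBinet

variable {R ι : Type*} [CommRing R]

theorem det_mul_eq_sum_det_submatrix_mul_prod {m : Type*} [Fintype m] [DecidableEq m]
    [Fintype ι] [DecidableEq ι] (A : Matrix m ι R) (B : Matrix ι m R) :
    (A * B).det = ∑ p : m → ι, (A.submatrix id p).det * ∏ i, B (p i) i := by
  simp only [det_apply', mul_apply, prod_univ_sum, mul_sum, Fintype.piFinset_univ, sum_mul]
  rw [sum_comm]
  refine sum_congr rfl fun p _ => sum_congr rfl fun σ _ => ?_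
  simp [prod_mul_distrib, mul_assoc]

theorem sum_perm_det_submatrix_comp_mul_prod {m : Type*} [Fintype m] [DecidableEq m]
    (A : Matrix m ι R) (B : Matrix ι m R) (e : m → ι) :
    ∑ σ : Equiv.Perm m, (A.submatrix id (e ∘ σ)).det * ∏ i, B (e (σ i)) i
      = (A.submatrix id e).det * (B.submatrix e id).det := by
  rw [det_apply' (B.submatrix e id), mul_sum]
  refine sum_congr rfl fun σ _ => ?_
  rw [show A.submatrix id (e ∘ σ) = (A.submatrix id e).submatrix id σ from rfl, det_permute']
  simp only [submatrix_apply, id]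
  ring

variable [LinearOrder ι] {k : ℕ}

/-- The Cauchy–Binet formula. -/
theorem det_mul_eq_sum_det_mul_det [Fintype ι] (A : Matrix (Fin k) ι R)
    (B : Matrix ι (Fin k) R) :
    (A * B).det = ∑ T : {T : Finset ι // T.card = k},
      (A.submatrix id (T.1.orderEmbOfFin T.2)).det *
        (B.submatrix (T.1.orderEmbOfFin T.2) id).det := by
  classical
  have hzero : ∀ p : Fin k → ι, ¬ Injective p → (A.submatrix id p).det * ∏ i, B (p i) i = 0 := by
    intro p hp
    obtain ⟨i, j, hij, hne⟩ : ∃ i j, p i = p j ∧ i ≠ j := by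
      simpa [Injective, and_comm] using hp
    rw [det_zero_of_column_eq hne (fun l => by simp [hij]), zero_mul]
  rw [det_mul_eq_sum_det_submatrix_mul_prod, ← sum_filter_of_ne (p := Injective)
      (fun p _ h => by_contra fun hp => h (hzero p hp)),
    sum_subtype _ (p := Injective) (fun p => by simp)]
  simp_rw [← sum_perm_det_submatrix_comp_mul_prod]
  rw [← Fintype.sum_prod_type']
  symm
  -- every injective `p : Fin k → ι` is uniquely `(T.orderEmbOfFin _) ∘ σ` with `T` its range
  refine Fintype.sum_bijective (fun Tσ => ⟨Tσ.1.1.orderEmbOfFin Tσ.1.2 ∘ Tσ.2,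
    (Finset.orderEmbOfFin _ _).injective.comp Tσ.2.injective⟩) ⟨?_, ?_⟩ _ _ fun _ => rfl
  · rintro ⟨⟨T, hT⟩, σ⟩ ⟨⟨T', hT'⟩, σ'⟩ h
    have hp := congrArg Subtype.val h
    obtain rfl : T = T' := by
      simpa only [Set.range_comp, Set.range_eq_univ.mpr (Equiv.surjective _), Set.image_univ,
        range_orderEmbOfFin, coe_inj] using congrArg Set.range hp
    simp only [Prod.mk.injEq, true_and]
    exact Equiv.ext fun x => (T.orderEmbOfFin hT).injective (congrFun hp x)
  · rintro ⟨p, hp⟩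
    have hcard : (univ.image p).card = k := by simp [card_image_of_injective _ hp]
    obtain ⟨σ, hσ⟩ := hp.exists_perm_eq_comp ((univ.image p).orderEmbOfFin hcard).injective
      (by simp)
    exact ⟨(⟨_, hcard⟩, σ), Subtype.ext hσ.symm⟩

/-- `det (A_T)²`, with junk value `0` unless `T` has `k` elements. -/
noncomputable def sqRowMinor (A : Matrix ι (Fin k) R) (T : Finset ι) : R :=
  if h : T.card = k then (A.submatrix (T.orderEmbOfFin h) id).det ^ 2 else 0

theorem sqRowMinor_of_card (A : Matrix ι (Fin k) R) {T : Finset ι} (h : T.card = k) :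
    sqRowMinor A T = (A.submatrix (T.orderEmbOfFin h) id).det ^ 2 :=
  dif_pos h

theorem sqRowMinor_eq_det_submatrix_sq (A : Matrix ι (Fin k) R) {g : Fin k → ι}
    (hg : Injective g) {T : Finset ι} (hT : Set.range g = T) :
    sqRowMinor A T = (A.submatrix g id).det ^ 2 := by
  have h : T.card = k := by
    rw [show T = univ.image g by rw [← coe_inj, coe_image, coe_univ, Set.image_univ, hT],
      card_image_of_injective _ hg, card_univ, Fintype.card_fin]
  obtain ⟨σ, rfl⟩ := hg.exists_perm_eq_comp (T.orderEmbOfFin h).injective (by simp [hT])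
  rw [sqRowMinor_of_card A h, show A.submatrix (T.orderEmbOfFin h ∘ σ) id
      = (A.submatrix (T.orderEmbOfFin h) id).submatrix σ id from rfl, det_permute, mul_pow,
    ← Int.cast_pow, ← Units.val_pow_eq_pow_val, Int.units_sq]
  simp

theorem det_transpose_mul_self_eq_sum_sqRowMinor [Fintype ι] (A : Matrix ι (Fin k) R) :
    (Aᵀ * A).det = ∑ T ∈ univ.powersetCard k, sqRowMinor A T := by
  rw [det_mul_eq_sum_det_mul_det,
    sum_subtype (univ.powersetCard k) (p := fun T => T.card = k) (by simp) (sqRowMinor A)]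
  refine sum_congr rfl fun T _ => ?_
  rw [sqRowMinor_of_card A T.2, sq, ← det_transpose (A.submatrix _ id)]
  rfl

end CauchyBinet

theorem det_fromCols_replicateCol_submatrix_sumElim {K ι m : Type*} [Field K] [Fintype m]
    [DecidableEq m] (X : Matrix ι m K) (r : ι → K) (e : m → ι) (i : ι)
    (he : IsUnit (X.submatrix e id).det) :
    ((fromCols X (replicateCol (Fin 1) r)).submatrix (Sum.elim e fun _ => i) id).det
      = (X.submatrix e id).det * (r i - X i ⬝ᵥ ((X.submatrix e id)⁻¹ *ᵥ (r ∘ e))) := by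
  have : Invertible (X.submatrix e id) := invertibleOfIsUnitDet _ he
  have hblocks : (fromCols X (replicateCol (Fin 1) r)).submatrix (Sum.elim e fun _ => i) id
      = fromBlocks (X.submatrix e id) (replicateCol (Fin 1) (r ∘ e))
          (replicateRow (Fin 1) (X i)) (of fun _ _ => r i) := by
    ext (a | a) (b | b) <;> simp
  rw [hblocks, det_fromBlocks₁₁, invOf_eq_nonsing_inv, det_unique (n := Fin 1),
    ← replicateRow_vecMul, dotProduct_mulVec]
  rfl

theorem det_transpose_mul_self_fromCols_replicateCol {R ι m : Type*} [CommRing R] [Fintype ι]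
    [Fintype m] [DecidableEq m] (X : Matrix ι m R) (r : ι → R) (h : Xᵀ *ᵥ r = 0) :
    ((fromCols X (replicateCol (Fin 1) r))ᵀ * fromCols X (replicateCol (Fin 1) r)).det
      = (Xᵀ * X).det * (r ⬝ᵥ r) := by
  rw [transpose_fromCols, fromRows_mul_fromCols, transpose_replicateCol,
    ← replicateCol_mulVec, h, ← replicateRow_vecMul, ← mulVec_transpose, h,
    replicateRow_mul_replicateCol]
  simp [det_fromBlocks_zero₂₁]

end Matrix

/-- The matrix `[A | r]`. -/
noncomputable def augmented {R ι : Type*} {d : ℕ} (A : Matrix ι (Fin d) R) (r : ι → R) :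
    Matrix ι (Fin (d + 1)) R :=
  (fromCols A (replicateCol (Fin 1) r)).submatrix id finSumFinEquiv.symm

theorem det_transpose_mul_self_augmented {R ι : Type*} [CommRing R] [Fintype ι] {d : ℕ}
    (A : Matrix ι (Fin d) R) (r : ι → R) (h : Aᵀ *ᵥ r = 0) :
    ((augmented A r)ᵀ * augmented A r).det = (Aᵀ * A).det * (r ⬝ᵥ r) := by
  rw [augmented, transpose_submatrix, ← submatrix_mul _ _ _ id _ bijective_id,
    det_submatrix_equiv_self, det_transpose_mul_self_fromCols_replicateCol A r h]

section LeastSquares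

variable {n d : ℕ} (X : Matrix (Fin n) (Fin d) ℝ) (y : Fin n → ℝ)

theorem lsLoss_eq_dotProduct (w : Fin d → ℝ) :
    lsLoss X y w = (y - X *ᵥ w) ⬝ᵥ (y - X *ᵥ w) :=
  sum_congr rfl fun i _ => by simp only [Pi.sub_apply]; ring

theorem transpose_mulVec_residual_eq_zero (h : IsUnit (Xᵀ * X).det) :
    Xᵀ *ᵥ (y - X *ᵥ ((Xᵀ * X)⁻¹ *ᵥ (Xᵀ *ᵥ y))) = 0 := by
  rw [mulVec_sub, mulVec_mulVec, mulVec_mulVec, mul_nonsing_inv _ h, one_mulVec, sub_self]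

theorem det_transpose_mul_self_pos (hdn : d ≤ n)
    (hgen : ∀ (S : Finset (Fin n)) (h : S.card = d), (rowSub X S h).det ≠ 0) :
    0 < (Xᵀ * X).det := by
  rw [det_transpose_mul_self_eq_sum_sqRowMinor]
  refine sum_pos (fun S hS => ?_) (powersetCard_nonempty.mpr (by simpa using hdn))
  rw [sqRowMinor_of_card X (mem_powersetCard.mp hS).2]
  exact pow_two_pos_of_ne_zero (hgen S _)

variable {S : Finset (Fin n)} (h : S.card = d)

theorem mulVec_rowSub_inv_mulVec_vecSub (hdet : IsUnit (rowSub X S h).det) (a : Fin d) :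
    (X *ᵥ ((rowSub X S h)⁻¹ *ᵥ vecSub y S h)) (S.orderEmbOfFin h a) = y (S.orderEmbOfFin h a) := by
  change (rowSub X S h *ᵥ ((rowSub X S h)⁻¹ *ᵥ vecSub y S h)) a = _
  rw [mulVec_mulVec, mul_nonsing_inv _ hdet, one_mulVec]
  rfl

theorem sqRowMinor_augmented_insert (w : Fin d → ℝ) (hdet : IsUnit (rowSub X S h).det)
    {i : Fin n} (hi : i ∉ S) :
    sqRowMinor (augmented X (y - X *ᵥ w)) (insert i S)
      = (rowSub X S h).det ^ 2 * ((X *ᵥ ((rowSub X S h)⁻¹ *ᵥ vecSub y S h)) i - y i) ^ 2 := by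
  set e := S.orderEmbOfFin h
  have hA : rowSub X S h = X.submatrix e id := rfl
  have hg : Injective (Sum.elim e fun _ : Fin 1 => i) :=
    e.injective.sumElim (fun _ _ _ => Subsingleton.elim _ _)
      fun a _ hai => hi (hai ▸ S.orderEmbOfFin_mem h a)
  have hrange :
      Set.range ((Sum.elim e fun _ : Fin 1 => i) ∘ finSumFinEquiv.symm) = ↑(insert i S) := by
    rw [Set.range_comp, Set.range_eq_univ.mpr (Equiv.surjective _), Set.image_univ,
      Set.Sum.elim_range, range_orderEmbOfFin, Set.range_const, coe_insert, Set.union_comm]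
    rfl
  have hsub : (augmented X (y - X *ᵥ w)).submatrix
      ((Sum.elim e fun _ : Fin 1 => i) ∘ finSumFinEquiv.symm) id
      = ((fromCols X (replicateCol (Fin 1) (y - X *ᵥ w))).submatrix
          (Sum.elim e fun _ : Fin 1 => i) id).submatrix finSumFinEquiv.symm finSumFinEquiv.symm :=
    rfl
  rw [sqRowMinor_eq_det_submatrix_sq _ (hg.comp finSumFinEquiv.symm.injective) hrange, hsub,
    det_submatrix_equiv_self, det_fromCols_replicateCol_submatrix_sumElim _ _ _ _ (hA ▸ hdet), ← hA]
  have hres : (y - X *ᵥ w) ∘ e = vecSub y S h - rowSub X S h *ᵥ w := rfl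
  rw [hres, mulVec_sub, mulVec_mulVec, nonsing_inv_mul _ hdet, one_mulVec, dotProduct_sub]
  change ((rowSub X S h).det * (y i - (X *ᵥ w) i
    - ((X *ᵥ ((rowSub X S h)⁻¹ *ᵥ vecSub y S h)) i - (X *ᵥ w) i))) ^ 2 = _
  ring

theorem det_sq_mul_lsLoss_eq_sum_sqRowMinor (w : Fin d → ℝ) (hdet : IsUnit (rowSub X S h).det) :
    (rowSub X S h).det ^ 2 * lsLoss X y ((rowSub X S h)⁻¹ *ᵥ vecSub y S h)
      = ∑ i ∈ Sᶜ, sqRowMinor (augmented X (y - X *ᵥ w)) (insert i S) := by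
  have hfit : ∀ i ∈ S, (X *ᵥ ((rowSub X S h)⁻¹ *ᵥ vecSub y S h)) i - y i = 0 := by
    intro i hi
    obtain ⟨a, rfl⟩ : i ∈ Set.range (S.orderEmbOfFin h) := by simpa using hi
    rw [mulVec_rowSub_inv_mulVec_vecSub X y h hdet, sub_self]
  rw [lsLoss, mul_sum, ← sum_compl_add_sum S,
    sum_eq_zero (s := S) fun i hi => by rw [hfit i hi]; ring, add_zero]
  exact sum_congr rfl fun i hi => (sqRowMinor_augmented_insert X y h w hdet (mem_compl.mp hi)).symm

end LeastSquares

/-- Expected loss of the Projection DPP least squares estimator: if the rows of `X` are in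
general position and `Pr{S} = det(X_S)²/det(XᵀX)` over size-`d` subsets, then
`E[L(X_S⁻¹ y_S)] = (d+1) L(w*)` where `w* = (XᵀX)⁻¹Xᵀy`. -/
theorem projection_dpp_expected_loss {n d : ℕ} (hdn : d ≤ n)
    (X : Matrix (Fin n) (Fin d) ℝ) (y : Fin n → ℝ)
    (hgen : ∀ (S : Finset (Fin n)) (h : S.card = d), (rowSub X S h).det ≠ 0) :
    ∑ S ∈ (Finset.powersetCard d (Finset.univ : Finset (Fin n))).attach,
      ((rowSub X S.1 (Finset.mem_powersetCard.mp S.2).2).det ^ 2 / (Xᵀ * X).det) *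
        lsLoss X y ((rowSub X S.1 (Finset.mem_powersetCard.mp S.2).2)⁻¹ *ᵥ
          vecSub y S.1 (Finset.mem_powersetCard.mp S.2).2)
      = (d + 1) * lsLoss X y ((Xᵀ * X)⁻¹ *ᵥ (Xᵀ *ᵥ y)) := by
  set wstar := (Xᵀ * X)⁻¹ *ᵥ (Xᵀ *ᵥ y)
  set r := y - X *ᵥ wstar
  have hD : 0 < (Xᵀ * X).det := det_transpose_mul_self_pos X hdn hgen
  have hr : Xᵀ *ᵥ r = 0 := transpose_mulVec_residual_eq_zero X y hD.ne'.isUnit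
  simp_rw [div_mul_eq_mul_div, ← sum_div]
  rw [sum_congr rfl fun S _ => det_sq_mul_lsLoss_eq_sum_sqRowMinor X y
      (mem_powersetCard.mp S.2).2 wstar (hgen _ _).isUnit,
    sum_attach (powersetCard d univ) (fun S => ∑ i ∈ Sᶜ, sqRowMinor (augmented X r) (insert i S)),
    sum_powersetCard_sum_compl_insert, ← det_transpose_mul_self_eq_sum_sqRowMinor,
    det_transpose_mul_self_augmented X r hr,
    lsLoss_eq_dotProduct, nsmul_eq_mul, Nat.cast_succ, mul_div_assoc,
    mul_div_cancel_left₀ _ hD.ne']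
end

section
/- A k-DPP_L(L) is a DPP (satisfies Definition of DPP with some marginal kernel) only if k = rank(L); in particular, when k = rank(L), the k-DPP with Pr{S} ∝ det(L_{S,S}) over subsets of size k has marginal kernel equal to the orthogonal projection onto the column space of L, i.e., Pr{T ⊆ S} = det((X X^†)_{T,T}) when L = XX^T. -/
/-!
Write `P = X (XᵀX)⁻¹ Xᵀ` and let `E_W` be the diagonal projection onto the coordinates in
`W`. The `k × k` principal minors of `X Xᵀ (1 - E_W)` are those of `X Xᵀ` on sets avoiding `W`
(and zero otherwise), so by Cauchy–Binet their sum is `det (Xᵀ (1 - E_W) X)`, which the matrix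
determinant lemma rewrites as `det (XᵀX) · det ((1 - P)_W)`: the probability that `S` avoids
`W` is `det ((1 - P)_W)`. Inclusion–exclusion over `W ⊆ T` then gives
`Pr {T ⊆ S} = ∑_{W ⊆ T} (-1)^|W| det ((1 - P)_W)`, which is the expansion of
`det (1 + (P - 1))_T = det P_T` into principal minors.
-/
open Matrix

open Finset Polynomial

theorem Finset.sum_filter_subset_eq_sum_powerset_neg_one_pow {α R : Type*} [DecidableEq α]
    [CommRing R] (𝒮 : Finset (Finset α)) (f : Finset α → R) (T : Finset α) :
    ∑ S ∈ 𝒮 with T ⊆ S, f S =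
      ∑ W ∈ T.powerset, (-1) ^ #W * ∑ S ∈ 𝒮 with Disjoint S W, f S := by
  have hsign (S : Finset α) :
      ∑ W ∈ T.powerset with Disjoint S W, (-1 : R) ^ #W = if T ⊆ S then 1 else 0 := by
    have hfilter : {W ∈ T.powerset | Disjoint S W} = (T \ S).powerset := by
      ext W
      simp only [mem_filter, mem_powerset, subset_sdiff, disjoint_comm]
    have := congrArg (Int.cast : ℤ → R) (sum_powerset_neg_one_pow_card (x := T \ S))
    push_cast at this
    rw [hfilter, this]
    exact if_congr sdiff_eq_empty_iff_subset rfl rfl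
  simp_rw [mul_sum, sum_filter]
  rw [sum_comm]
  refine sum_congr rfl fun S _ => ?_
  rw [← sum_filter, ← sum_mul, hsign, ite_mul, one_mul, zero_mul]

namespace Matrix

theorem isUnit_of_rank_eq_card {n K : Type*} [Fintype n] [DecidableEq n] [Field K]
    {A : Matrix n n K} (h : A.rank = Fintype.card n) : IsUnit A := by
  rw [← mulVec_surjective_iff_isUnit]
  have : LinearMap.range A.mulVecLin = ⊤ :=
    Submodule.eq_top_of_finrank_eq (by rw [← rank, h, Module.finrank_fintype_fun_eq_card])
  exact LinearMap.range_eq_top.mp this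

variable {m n R : Type*} [DecidableEq m] [DecidableEq n] [CommRing R]

def principalMinor (M : Matrix n n R) (s : Finset n) : R :=
  (M.submatrix ((↑) : s → n) ((↑) : s → n)).det

theorem principalMinor_submatrix_subtype (M : Matrix n n R) (s : Finset n) (u : Finset s) :
    (M.submatrix ((↑) : s → n) ((↑) : s → n)).principalMinor u =
      M.principalMinor (u.map (Function.Embedding.subtype _)) := by
  rw [principalMinor, principalMinor, ← det_submatrix_equiv_self (u.equivMap _)]
  rfl

theorem det_one_add_eq_sum_principalMinor [Fintype n] (M : Matrix n n R) :
    det (1 + M) = ∑ s : Finset n, M.principalMinor s := by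
  have := (detRowAlternating (n := n) (R := R)).map_add_univ M.row (1 : Matrix n n R).row
  convert this using 1
  · rw [add_comm]; rfl
  · exact sum_congr rfl fun s _ => (det_piecewise_one_eq_submatrix_det M s).symm

theorem det_one_add_submatrix_eq_sum_principalMinor (M : Matrix n n R) (s : Finset n) :
    det (1 + M.submatrix ((↑) : s → n) ((↑) : s → n)) =
      ∑ w ∈ s.powerset, M.principalMinor w := by
  rw [det_one_add_eq_sum_principalMinor]
  refine sum_nbij' (fun u => u.map (Function.Embedding.subtype _)) (fun w => w.subtype (· ∈ s))
    ?_ ?_ ?_ ?_ fun u _ => principalMinor_submatrix_subtype M s u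
  · exact fun u _ => mem_powerset.mpr fun x hx => property_of_mem_map_subtype u hx
  · simp
  · exact fun u _ => Finset.map_injective _ (subtype_map_of_mem fun x hx =>
      property_of_mem_map_subtype u hx)
  · exact fun w hw => subtype_map_of_mem (mem_powerset.mp hw)

theorem principalMinor_eq_sum_powerset (M : Matrix n n R) (s : Finset n) :
    M.principalMinor s = ∑ w ∈ s.powerset, (-1) ^ #w * (1 - M).principalMinor w := by
  have : M.submatrix ((↑) : s → n) ((↑) : s → n) =
      1 + (M - 1).submatrix ((↑) : s → n) ((↑) : s → n) := by
    ext i j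
    simp only [submatrix_apply, add_apply, sub_apply, one_apply, Subtype.ext_iff]
    split_ifs <;> ring
  rw [principalMinor, this, det_one_add_submatrix_eq_sum_principalMinor]
  refine sum_congr rfl fun w _ => ?_
  rw [← neg_sub, principalMinor, principalMinor, ← Fintype.card_coe, ← det_neg]
  rfl

variable [Fintype m] [Fintype n]

-- Cauchy–Binet, read off from the coefficient of `X ^ card m` in
-- `X ^ card n * χ (A * B) = X ^ card m * χ (B * A)`.
theorem sum_principalMinor_mul_eq_det_mul_comm (A : Matrix m n R) (B : Matrix n m R) :
    ∑ s ∈ (univ : Finset m).powersetCard (Fintype.card n), (A * B).principalMinor s =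
      (B * A).det := by
  have h := congrArg (coeff · (Fintype.card m)) (charpoly_mul_comm' A B)
  simp only [coeff_X_pow_mul', le_refl, if_true, Nat.sub_self] at h
  rw [det_eq_sign_charpoly_coeff, ← h]
  split_ifs with hle
  · rw [charpoly_coeff_eq_sum_minors _ _ hle, ← mul_assoc, ← mul_pow, neg_one_mul, neg_neg,
      one_pow, one_mul]
    rfl
  · rw [powersetCard_eq_empty.mpr (by simpa using hle), sum_empty, mul_zero]

theorem principalMinor_mul_diagonal (M : Matrix n n R) (d : n → R) (s : Finset n) :
    (M * diagonal d).principalMinor s = M.principalMinor s * ∏ i ∈ s, d i := by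
  have : (M * diagonal d).submatrix ((↑) : s → n) ((↑) : s → n) =
      M.submatrix (↑) (↑) * diagonal fun i : s => d i := by
    ext i j
    simp [mul_diagonal]
  rw [principalMinor, this, det_mul, det_diagonal, prod_coe_sort s d, principalMinor]

theorem one_sub_diagonal_indicator_mul_eq_piecewise (M : Matrix n n R) (W : Finset n) :
    1 - diagonal (fun i => if i ∈ W then 1 else 0) * M =
      of (W.piecewise (1 - M).row (1 : Matrix n n R).row) := by
  ext i j
  by_cases hi : i ∈ W <;> simp [diagonal_mul, hi, row, Finset.piecewise]

theorem sum_principalMinor_disjoint_mul_transpose (X : Matrix n m R) (hX : IsUnit (Xᵀ * X).det)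
    (W : Finset n) :
    ∑ S ∈ (univ : Finset n).powersetCard (Fintype.card m) with Disjoint S W,
      (X * Xᵀ).principalMinor S =
      (Xᵀ * X).det * (1 - X * (Xᵀ * X)⁻¹ * Xᵀ).principalMinor W := by
  set E : Matrix n n R := diagonal fun i => if i ∈ W then 1 else 0
  have hcompl : 1 - E = diagonal fun i => if i ∉ W then 1 else 0 := by
    ext i j
    by_cases hi : i ∈ W <;> simp [E, one_apply, diagonal_apply, hi]
  have hminors (S : Finset n) : (X * (Xᵀ * (1 - E))).principalMinor S =
      if Disjoint S W then (X * Xᵀ).principalMinor S else 0 := by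
    rw [← Matrix.mul_assoc, hcompl, principalMinor_mul_diagonal, prod_boole, mul_ite, mul_one,
      mul_zero]
    simp only [← disjoint_left]
  calc _ = ∑ S ∈ (univ : Finset n).powersetCard (Fintype.card m),
        (X * (Xᵀ * (1 - E))).principalMinor S := by
        rw [sum_filter]
        exact sum_congr rfl fun S _ => (hminors S).symm
    _ = (Xᵀ * X + (-(Xᵀ * E)) * X).det := by
        rw [sum_principalMinor_mul_eq_det_mul_comm, Matrix.mul_sub, Matrix.mul_one,
          Matrix.sub_mul, sub_eq_add_neg, Matrix.neg_mul]
    _ = (Xᵀ * X).det * (1 - E * (X * (Xᵀ * X)⁻¹ * Xᵀ)).det := by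
        rw [det_add_mul _ _ hX, ← det_one_sub_mul_comm]
        simp [Matrix.mul_neg, sub_eq_add_neg, Matrix.mul_assoc]
    _ = _ := by
        rw [one_sub_diagonal_indicator_mul_eq_piecewise, det_piecewise_one_eq_submatrix_det]
        rfl

end Matrix

theorem subdet_eq_principalMinor {n : ℕ} (M : Matrix (Fin n) (Fin n) ℝ) (S : Finset (Fin n)) :
    subdet M S = M.principalMinor S :=
  rfl

/-- When `k = rank(L)` with `L = XXᵀ` for full-rank `X ∈ ℝ^{n×k}`, the `k`-DPP with
`Pr{S} ∝ det(L_{S,S})` over size-`k` subsets is a Projection DPP: its marginal kernel is the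
orthogonal projection `XX† = X(XᵀX)⁻¹Xᵀ`, i.e. `Pr{T ⊆ S} = det((XX†)_{T,T})`. -/
theorem kdpp_rank_is_projection_dpp {n k : ℕ} (X : Matrix (Fin n) (Fin k) ℝ)
    (hrank : X.rank = k) (T : Finset (Fin n)) :
    ∑ S ∈ Finset.powersetCard k (Finset.univ : Finset (Fin n)),
      (if T ⊆ S then
        subdet (X * Xᵀ) S /
          (∑ T' ∈ Finset.powersetCard k (Finset.univ : Finset (Fin n)), subdet (X * Xᵀ) T')
      else 0)
      = subdet (X * (Xᵀ * X)⁻¹ * Xᵀ) T := by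
  have hG : IsUnit (Xᵀ * X).det := (isUnit_iff_isUnit_det _).mp <|
    isUnit_of_rank_eq_card (by rw [rank_transpose_mul_self, hrank, Fintype.card_fin])
  have hdisjoint := sum_principalMinor_disjoint_mul_transpose X hG
  have hnormalizer := sum_principalMinor_mul_eq_det_mul_comm X Xᵀ
  rw [Fintype.card_fin] at hdisjoint hnormalizer
  simp only [subdet_eq_principalMinor]
  rw [hnormalizer, ← sum_filter, ← sum_div, sum_filter_subset_eq_sum_powerset_neg_one_pow]
  simp_rw [hdisjoint, mul_left_comm _ (Xᵀ * X).det, ← mul_sum]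
  rw [mul_div_cancel_left₀ _ hG.ne_zero, ← principalMinor_eq_sum_powerset]
end
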